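/- arXiv:1709.09454 — 6 statements merged into one kernel-verified Lean document; each statement's English description precedes it below -/
import Mathlib

section
/- Let X be a type equipped with a symmetric neighbor relation ~, and let Ω₁, Ω₂ be types. Suppose M₁ : X → PMF Ω₁ satisfies ε₁-differential privacy and M₂ : X → PMF Ω₂ satisfies ε₂-differential privacy with respect to ~, where ε₁, ε₂ ≥ 0. Then the combined mechanism M₃ : X → PMF (Ω₁ × Ω₂) defined by M₃(x) = (M₁ x).bind (fun o₁ => (M₂ x).map (fun o₂ => (o₁, o₂))) satisfies (ε₁ + ε₂)-differential privacy: for all x ~ x' and every set O ⊆ Ω₁ × Ω₂, Pr[M₃(x) ∈ O] ≤ exp(ε₁ + ε₂) · Pr[M₃(x') ∈ O]. -/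
/-- A mechanism `M : X → PMF Ω` satisfies `ε`-differential privacy w.r.t. a
neighbor relation `neighbor` on `X` if for all neighboring `x, x'` and every
set `O ⊆ Ω`, `Pr[M x ∈ O] ≤ exp ε · Pr[M x' ∈ O]`. -/
def DiffPrivate {X Ω : Type*} (neighbor : X → X → Prop) (ε : ℝ)
    (M : X → PMF Ω) : Prop :=
  ∀ x x', neighbor x x' → ∀ O : Set Ω,
    (M x).toOuterMeasure O ≤ ENNReal.ofReal (Real.exp ε) * (M x').toOuterMeasure O

/-- pointwise version of DP from the set version -/
lemma diffPrivate_pointwise {X Ω : Type*} {neighbor : X → X → Prop} {ε : ℝ}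
    {M : X → PMF Ω} (h : DiffPrivate neighbor ε M) {x x' : X}
    (hn : neighbor x x') (a : Ω) :
    M x a ≤ ENNReal.ofReal (Real.exp ε) * M x' a := by
  have := h x x' hn {a}
  simpa [PMF.toOuterMeasure_apply_singleton] using this

/-- Sequential composition of differentially private mechanisms. -/
theorem stmt_0 {X Ω₁ Ω₂ : Type*} (neighbor : X → X → Prop)
    (hsym : Symmetric neighbor) (ε₁ ε₂ : ℝ) (hε₁ : 0 ≤ ε₁) (hε₂ : 0 ≤ ε₂)
    (M₁ : X → PMF Ω₁) (M₂ : X → PMF Ω₂)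
    (h₁ : DiffPrivate neighbor ε₁ M₁) (h₂ : DiffPrivate neighbor ε₂ M₂) :
    DiffPrivate neighbor (ε₁ + ε₂)
      (fun x => (M₁ x).bind (fun o₁ => (M₂ x).map (fun o₂ => (o₁, o₂)))) := by
  intro x x' hn O
  set c₁ := ENNReal.ofReal (Real.exp ε₁)
  set c₂ := ENNReal.ofReal (Real.exp ε₂)
  have hval : ∀ y : X, ∀ ω : Ω₁ × Ω₂,
      ((M₁ y).bind (fun o₁ => (M₂ y).map (fun o₂ => (o₁, o₂)))) ω
        = M₁ y ω.1 * M₂ y ω.2 := by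
    classical
    intro y ⟨a, b⟩
    rw [PMF.bind_apply]
    have : ∀ o₁ : Ω₁,
        M₁ y o₁ * ((M₂ y).map (fun o₂ => (o₁, o₂))) (a, b)
          = if o₁ = a then M₁ y a * M₂ y b else 0 := by
      intro o₁
      rw [PMF.map_apply]
      by_cases h : o₁ = a
      · subst h
        simp only [Prod.mk.injEq, true_and]
        congr 1
        rw [tsum_eq_single b (fun c hc => by simp [Ne.symm hc])]
        simp
      · simp [Prod.mk.injEq, h, Ne.symm h]
    simp_rw [this]
    simp [tsum_ite_eq]
  have hpt : ∀ ω : Ω₁ × Ω₂,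
      O.indicator (fun ω => ((M₁ x).bind (fun o₁ => (M₂ x).map (fun o₂ => (o₁, o₂)))) ω) ω
        ≤ c₁ * c₂ *
          O.indicator (fun ω => ((M₁ x').bind (fun o₁ => (M₂ x').map (fun o₂ => (o₁, o₂)))) ω) ω := by
    intro ω
    by_cases hω : ω ∈ O
    · rw [Set.indicator_of_mem hω, Set.indicator_of_mem hω, hval x ω, hval x' ω]
      calc M₁ x ω.1 * M₂ x ω.2
          ≤ (c₁ * M₁ x' ω.1) * (c₂ * M₂ x' ω.2) :=
            mul_le_mul' (diffPrivate_pointwise h₁ hn ω.1) (diffPrivate_pointwise h₂ hn ω.2)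
        _ = c₁ * c₂ * (M₁ x' ω.1 * M₂ x' ω.2) := by ring
    · simp [Set.indicator_of_notMem hω]
  calc ((M₁ x).bind (fun o₁ => (M₂ x).map (fun o₂ => (o₁, o₂)))).toOuterMeasure O
      = ∑' ω, O.indicator (fun ω => ((M₁ x).bind (fun o₁ => (M₂ x).map (fun o₂ => (o₁, o₂)))) ω) ω :=
        PMF.toOuterMeasure_apply _ O
    _ ≤ ∑' ω, c₁ * c₂ *
          O.indicator (fun ω => ((M₁ x').bind (fun o₁ => (M₂ x').map (fun o₂ => (o₁, o₂)))) ω) ω :=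
        ENNReal.tsum_le_tsum hpt
    _ = c₁ * c₂ *
          ((M₁ x').bind (fun o₁ => (M₂ x').map (fun o₂ => (o₁, o₂)))).toOuterMeasure O := by
        rw [ENNReal.tsum_mul_left, PMF.toOuterMeasure_apply]
    _ = ENNReal.ofReal (Real.exp (ε₁ + ε₂)) *
          ((M₁ x').bind (fun o₁ => (M₂ x').map (fun o₂ => (o₁, o₂)))).toOuterMeasure O := by
        rw [Real.exp_add, ENNReal.ofReal_mul (Real.exp_pos ε₁).le]
end

section
/- Fix d ≥ 1, Δ > 0 and ε > 0. For c : Fin d → ℝ, let μ_c be the measure on (Fin d → ℝ) obtained from the Lebesgue (product volume) measure by the density x ↦ ∏_{i} (ε/(2Δ)) · exp(−(ε/Δ)·|x i − c i|) (the distribution of c plus independent Laplace(Δ/ε) noise in each coordinate). Then for all a, b : Fin d → ℝ with ∑_{i} |a i − b i| ≤ Δ and every measurable set S ⊆ (Fin d → ℝ), μ_a(S) ≤ exp(ε) · μ_b(S). In other words, the Laplace mechanism that adds independent zero-mean Laplace noise of scale Δ/ε to each of the d output values of a function with L1 global sensitivity Δ satisfies ε-differential privacy. -/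
open MeasureTheory

/-- The distribution of `c` plus independent Laplace(Δ/ε) noise in each of the
`d` coordinates: Lebesgue measure on `Fin d → ℝ` with density
`x ↦ ∏ i, (ε/(2Δ)) · exp (−(ε/Δ)·|x i − c i|)`. -/
noncomputable def laplaceMech (d : ℕ) (Δ ε : ℝ) (c : Fin d → ℝ) :
    Measure (Fin d → ℝ) :=
  volume.withDensity
    (fun x => ENNReal.ofReal (∏ i, (ε / (2 * Δ)) * Real.exp (-(ε / Δ) * |x i - c i|)))

/-- The Laplace mechanism adding independent zero-mean Laplace noise of scale
`Δ/ε` to each of the `d` output values of a function with L1 global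
sensitivity `Δ` satisfies `ε`-differential privacy. -/
theorem stmt_1 (d : ℕ) (hd : 1 ≤ d) (Δ ε : ℝ) (hΔ : 0 < Δ) (hε : 0 < ε)
    (a b : Fin d → ℝ) (hab : ∑ i, |a i - b i| ≤ Δ)
    (S : Set (Fin d → ℝ)) (hS : MeasurableSet S) :
    laplaceMech d Δ ε a S ≤ ENNReal.ofReal (Real.exp ε) * laplaceMech d Δ ε b S := by
  have key : ∀ x : Fin d → ℝ,
      (∏ i, (ε / (2 * Δ)) * Real.exp (-(ε / Δ) * |x i - a i|)) ≤
        Real.exp ε * ∏ i, (ε / (2 * Δ)) * Real.exp (-(ε / Δ) * |x i - b i|) := by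
    intro x
    have hk : (0:ℝ) ≤ ε / (2 * Δ) := by positivity
    rw [Finset.prod_mul_distrib, Finset.prod_mul_distrib, Finset.prod_const,
      ← Real.exp_sum, ← Real.exp_sum]
    rw [mul_comm (Real.exp ε), mul_assoc, ← Real.exp_add]
    apply mul_le_mul_of_nonneg_left _ (pow_nonneg hk _)
    apply Real.exp_le_exp.2
    have h1 : ∑ i, -(ε / Δ) * |x i - a i| = -(ε / Δ) * ∑ i, |x i - a i| := by
      rw [Finset.mul_sum]
    have h2 : ∑ i, -(ε / Δ) * |x i - b i| = -(ε / Δ) * ∑ i, |x i - b i| := by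
      rw [Finset.mul_sum]
    rw [h1, h2]
    have htri : ∑ i, |x i - b i| ≤ (∑ i, |x i - a i|) + ∑ i, |a i - b i| := by
      rw [← Finset.sum_add_distrib]
      apply Finset.sum_le_sum
      intro i _
      have h : x i - b i = (x i - a i) + (a i - b i) := by ring
      rw [h]
      exact abs_add_le _ _
    have hεΔ : 0 < ε / Δ := by positivity
    have h4 : (ε / Δ) * Δ = ε := by field_simp
    have h5 : (ε / Δ) * (∑ i, |x i - b i|) ≤ (ε / Δ) * ((∑ i, |x i - a i|) + Δ) :=
      mul_le_mul_of_nonneg_left (le_trans htri (by linarith)) hεΔ.le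
    nlinarith [h5]
  unfold laplaceMech
  rw [withDensity_apply _ hS, withDensity_apply _ hS, ← lintegral_const_mul' _ _
    (by simp : (ENNReal.ofReal (Real.exp ε)) ≠ ⊤)]
  apply lintegral_mono
  intro x
  dsimp only
  rw [← ENNReal.ofReal_mul (le_of_lt (Real.exp_pos ε))]
  exact ENNReal.ofReal_le_ofReal (key x)
end

section
/- Let O be a nonempty finite type, Δ > 0, ε > 0, and let q, q' : O → ℝ be two score functions satisfying |q(o) − q'(o)| ≤ Δ for every o ∈ O. Then for every o ∈ O, exp(ε·q(o)/(2Δ)) / (∑_{o'} exp(ε·q(o')/(2Δ))) ≤ exp(ε) · exp(ε·q'(o)/(2Δ)) / (∑_{o'} exp(ε·q'(o')/(2Δ))). That is, the exponential mechanism, which outputs o with probability proportional to exp(ε·q(·,o)/(2Δ₁(q))), changes the probability of any outcome by a factor of at most exp(ε) when the input is replaced by a neighboring input, and hence maintains ε-differential privacy. -/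
/-- The exponential mechanism, which outputs `o` with probability proportional
to `exp (ε·q o/(2Δ))`, changes the probability of any outcome by a factor of
at most `exp ε` when the score function `q` is replaced by a score function
`q'` (arising from a neighboring input) with `|q o − q' o| ≤ Δ` pointwise. -/
theorem stmt_2 {O : Type*} [Fintype O] [Nonempty O] (Δ ε : ℝ)
    (hΔ : 0 < Δ) (hε : 0 < ε) (q q' : O → ℝ)
    (h : ∀ o, |q o - q' o| ≤ Δ) (o : O) :
    Real.exp (ε * q o / (2 * Δ)) / (∑ o', Real.exp (ε * q o' / (2 * Δ)))
      ≤ Real.exp ε *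
        (Real.exp (ε * q' o / (2 * Δ)) / (∑ o', Real.exp (ε * q' o' / (2 * Δ)))) := by
  have key : ∀ x : O, Real.exp (ε * q x / (2 * Δ)) ≤
      Real.exp (ε / 2) * Real.exp (ε * q' x / (2 * Δ)) := by
    intro x
    rw [← Real.exp_add]
    apply Real.exp_le_exp.2
    have hx := (abs_le.1 (h x)).2
    have h2Δ : (0:ℝ) < 2 * Δ := by positivity
    have key : ε * q x / (2 * Δ) - ε * q' x / (2 * Δ) ≤ ε / 2 := by
      rw [div_sub_div_same, div_le_div_iff₀ h2Δ (by norm_num)]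
      nlinarith
    linarith
  have key' : ∀ x : O, Real.exp (ε * q' x / (2 * Δ)) ≤
      Real.exp (ε / 2) * Real.exp (ε * q x / (2 * Δ)) := by
    intro x
    rw [← Real.exp_add]
    apply Real.exp_le_exp.2
    have hx := (abs_le.1 (h x)).1
    have h2Δ : (0:ℝ) < 2 * Δ := by positivity
    have key : ε * q' x / (2 * Δ) - ε * q x / (2 * Δ) ≤ ε / 2 := by
      rw [div_sub_div_same, div_le_div_iff₀ h2Δ (by norm_num)]
      nlinarith
    linarith
  have hS : 0 < ∑ o', Real.exp (ε * q o' / (2 * Δ)) :=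
    Finset.sum_pos (fun i _ => Real.exp_pos _) Finset.univ_nonempty
  have hS' : 0 < ∑ o', Real.exp (ε * q' o' / (2 * Δ)) :=
    Finset.sum_pos (fun i _ => Real.exp_pos _) Finset.univ_nonempty
  have hsum : (∑ o', Real.exp (ε * q' o' / (2 * Δ))) ≤
      Real.exp (ε / 2) * ∑ o', Real.exp (ε * q o' / (2 * Δ)) := by
    rw [Finset.mul_sum]
    exact Finset.sum_le_sum fun i _ => key' i
  rw [← mul_div_assoc, div_le_div_iff₀ hS hS']
  calc Real.exp (ε * q o / (2 * Δ)) * (∑ o', Real.exp (ε * q' o' / (2 * Δ)))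
      ≤ (Real.exp (ε / 2) * Real.exp (ε * q' o / (2 * Δ))) *
        (Real.exp (ε / 2) * ∑ o', Real.exp (ε * q o' / (2 * Δ))) := by
        apply mul_le_mul (key o) hsum hS'.le
        positivity
    _ = Real.exp ε * Real.exp (ε * q' o / (2 * Δ)) *
        (∑ o', Real.exp (ε * q o' / (2 * Δ))) := by
        rw [show Real.exp ε = Real.exp (ε/2) * Real.exp (ε/2) by
          rw [← Real.exp_add]; ring_nf]
        ring
end

section
/- Let t > 0 and 0 < ε ≤ t, and set π = (exp(ε) − 1)/(exp(t) − 1). Then 0 < π ≤ 1, and the following two identities/inequalities hold: (1 − π) + π·exp(t) = exp(ε), and exp(ε)·((1 − π) + π·exp(−t)) ≥ 1. -/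
/-- Basic properties of the sampling probability
`π = (exp ε − 1)/(exp t − 1)` used by the sample mechanism for personalized
differential privacy. -/
theorem stmt_5 (t ε : ℝ) (ht : 0 < t) (hε : 0 < ε) (hεt : ε ≤ t)
    (π : ℝ) (hπ : π = (Real.exp ε - 1) / (Real.exp t - 1)) :
    (0 < π ∧ π ≤ 1) ∧
      (1 - π) + π * Real.exp t = Real.exp ε ∧
      1 ≤ Real.exp ε * ((1 - π) + π * Real.exp (-t)) := by
  have htpos : (0:ℝ) < Real.exp t - 1 := by
    have := Real.exp_lt_exp.mpr ht
    simpa [Real.exp_zero] using sub_pos.mpr this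
  have hεpos : (0:ℝ) < Real.exp ε - 1 := by
    have := Real.exp_lt_exp.mpr hε
    simpa [Real.exp_zero] using sub_pos.mpr this
  have hle : Real.exp ε - 1 ≤ Real.exp t - 1 := by
    have := Real.exp_le_exp.mpr hεt
    linarith
  have hπpos : 0 < π := hπ ▸ div_pos hεpos htpos
  have hπle : π ≤ 1 := hπ ▸ (div_le_one htpos).mpr hle
  have hid : (1 - π) + π * Real.exp t = Real.exp ε := by
    subst hπ
    field_simp
    ring
  refine ⟨⟨hπpos, hπle⟩, hid, ?_⟩
  have hneg : Real.exp (-t) = 1 / Real.exp t := by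
    rw [Real.exp_neg]; ring
  have hexpt : (0:ℝ) < Real.exp t := Real.exp_pos t
  have key : Real.exp ε * ((1 - π) + π * Real.exp (-t)) =
      Real.exp ε - (Real.exp ε - 1) * Real.exp (ε - t) := by
    subst hπ
    rw [hneg, Real.exp_sub]
    field_simp
    ring
  rw [key]
  have h1 : Real.exp (ε - t) ≤ 1 := by
    have : ε - t ≤ 0 := by linarith
    simpa [Real.exp_zero] using Real.exp_le_exp.mpr this
  nlinarith [Real.exp_pos (ε - t)]
end

section
/- Let t > 0, 0 < ε ≤ t, and π = (exp(ε) − 1)/(exp(t) − 1). Let μ, μ' : PMF Ω be two output distributions of a t-differentially private mechanism on a pair of neighboring inputs, i.e., for every set O ⊆ Ω, μ(O) ≤ exp(t)·μ'(O) and μ'(O) ≤ exp(t)·μ(O). Let S be the mixture distribution that equals μ with probability π and μ' with probability 1 − π (so S(O) = π·μ(O) + (1 − π)·μ'(O) for every O). Then for every set O ⊆ Ω, both S(O) ≤ exp(ε)·μ'(O) and μ'(O) ≤ exp(ε)·S(O). That is, the sample mechanism—randomly including the differing record with probability π and then running a t-differentially private mechanism—guarantees privacy level ε for that record. -/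
/-- The sample mechanism: randomly including the differing record with
probability `π = (exp ε − 1)/(exp t − 1)` and then running a `t`-differentially
private mechanism guarantees privacy level `ε` for that record.  Here `μ` and
`μ'` are the output distributions of the `t`-DP mechanism with and without the
record, and the mixture `S(O) = π·μ(O) + (1 − π)·μ'(O)` is the output
distribution of the sample mechanism on the larger input. -/
theorem stmt_6 {Ω : Type*} (t ε : ℝ) (ht : 0 < t) (hε : 0 < ε) (hεt : ε ≤ t)
    (π : ℝ) (hπ : π = (Real.exp ε - 1) / (Real.exp t - 1))
    (μ μ' : PMF Ω)
    (h₁ : ∀ O : Set Ω,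
      μ.toOuterMeasure O ≤ ENNReal.ofReal (Real.exp t) * μ'.toOuterMeasure O)
    (h₂ : ∀ O : Set Ω,
      μ'.toOuterMeasure O ≤ ENNReal.ofReal (Real.exp t) * μ.toOuterMeasure O)
    (S : Set Ω → ENNReal)
    (hS : ∀ O : Set Ω, S O = ENNReal.ofReal π * μ.toOuterMeasure O
      + ENNReal.ofReal (1 - π) * μ'.toOuterMeasure O) :
    ∀ O : Set Ω,
      S O ≤ ENNReal.ofReal (Real.exp ε) * μ'.toOuterMeasure O ∧
      μ'.toOuterMeasure O ≤ ENNReal.ofReal (Real.exp ε) * S O := by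
  intro O
  have hEt : 1 < Real.exp t := Real.one_lt_exp_iff.mpr ht
  have hEε : 1 < Real.exp ε := Real.one_lt_exp_iff.mpr hε
  have hle : Real.exp ε ≤ Real.exp t := Real.exp_le_exp.mpr hεt
  have hπ0 : 0 ≤ π := by
    rw [hπ]; exact div_nonneg (by linarith) (by linarith)
  have hπ1 : π ≤ 1 := by
    rw [hπ, div_le_one (by linarith)]; linarith
  have hkey : π * (Real.exp t - 1) = Real.exp ε - 1 := by
    rw [hπ, div_mul_cancel₀ _ (by linarith : Real.exp t - 1 ≠ 0)]
  -- finiteness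
  have hA1 : μ.toOuterMeasure O ≤ 1 := by
    rw [PMF.toOuterMeasure_apply]
    exact le_trans (ENNReal.tsum_le_tsum fun x => Set.indicator_apply_le fun _ => le_rfl)
      (le_of_eq μ.tsum_coe)
  have hB1 : μ'.toOuterMeasure O ≤ 1 := by
    rw [PMF.toOuterMeasure_apply]
    exact le_trans (ENNReal.tsum_le_tsum fun x => Set.indicator_apply_le fun _ => le_rfl)
      (le_of_eq μ'.tsum_coe)
  have hAne : μ.toOuterMeasure O ≠ ⊤ := ne_top_of_le_ne_top ENNReal.one_ne_top hA1
  have hBne : μ'.toOuterMeasure O ≠ ⊤ := ne_top_of_le_ne_top ENNReal.one_ne_top hB1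
  set a : ℝ := (μ.toOuterMeasure O).toReal with ha
  set b : ℝ := (μ'.toOuterMeasure O).toReal with hb
  have ha0 : 0 ≤ a := ENNReal.toReal_nonneg
  have hb0 : 0 ≤ b := ENNReal.toReal_nonneg
  have hAeq : μ.toOuterMeasure O = ENNReal.ofReal a := (ENNReal.ofReal_toReal hAne).symm
  have hBeq : μ'.toOuterMeasure O = ENNReal.ofReal b := (ENNReal.ofReal_toReal hBne).symm
  -- real versions of hypotheses
  have h1r : a ≤ Real.exp t * b := by
    have := h₁ O
    rw [hAeq, hBeq, ← ENNReal.ofReal_mul (Real.exp_pos t).le] at this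
    exact (ENNReal.ofReal_le_ofReal_iff (by positivity)).mp this
  have h2r : b ≤ Real.exp t * a := by
    have := h₂ O
    rw [hAeq, hBeq, ← ENNReal.ofReal_mul (Real.exp_pos t).le] at this
    exact (ENNReal.ofReal_le_ofReal_iff (by positivity)).mp this
  have hSeq : S O = ENNReal.ofReal (π * a + (1 - π) * b) := by
    rw [hS O, hAeq, hBeq, ← ENNReal.ofReal_mul hπ0, ← ENNReal.ofReal_mul (by linarith),
      ENNReal.ofReal_add (mul_nonneg hπ0 ha0) (mul_nonneg (by linarith) hb0)]
  constructor
  · rw [hSeq, hBeq, ← ENNReal.ofReal_mul (Real.exp_pos ε).le]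
    apply ENNReal.ofReal_le_ofReal
    nlinarith [mul_le_mul_of_nonneg_left h1r hπ0]
  · rw [hSeq, hBeq, ← ENNReal.ofReal_mul (Real.exp_pos ε).le]
    apply ENNReal.ofReal_le_ofReal
    nlinarith [mul_le_mul_of_nonneg_left h2r (mul_nonneg (Real.exp_pos ε).le hπ0),
      mul_nonneg (mul_nonneg hb0 (by linarith : (0:ℝ) ≤ Real.exp ε - 1)) (sub_nonneg.mpr hle),
      mul_nonneg (sub_nonneg.mpr hle) hb0]
end

section
/- Let V be a finite vertex type and V_pub ⊆ V a set of public users. For a simple graph G on V and a private vertex v ∉ V_pub, let f₁(G)(v) denote the number of public users adjacent to v in G (the size of v's 1st-hop connection fingerprint). Then for any two neighboring simple graphs G, G' on V (graphs whose edge sets differ in exactly one edge), ∑_{v ∉ V_pub} |f₁(G)(v) − f₁(G')(v)| ≤ 1. That is, the global sensitivity of the query f₁ returning the vector of 1st-hop connection-fingerprint counts of all private users is at most 1. -/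
open Classical

private lemma card_le_helper {α : Type*} [DecidableEq α] {F F' : Finset α} {x : α}
    (h : F.erase x = F'.erase x) : F.card ≤ F'.card + 1 := by
  have hsub : F ⊆ insert x F' := by
    intro y hy
    rcases eq_or_ne y x with rfl | hne
    · exact Finset.mem_insert_self _ _
    · apply Finset.mem_insert_of_mem
      have hy' : y ∈ F.erase x := Finset.mem_erase.2 ⟨hne, hy⟩
      rw [h] at hy'
      exact Finset.mem_of_mem_erase hy'
  calc F.card ≤ (insert x F').card := Finset.card_le_card hsub
    _ ≤ F'.card + 1 := Finset.card_insert_le _ _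

open Classical in
/-- The global sensitivity of the query `f₁` returning the vector of the
numbers of public neighbors (1st-hop connection-fingerprint counts) of all
private users is at most 1: for any two graphs whose edge sets differ in
exactly one edge, the L1 distance of the count vectors is at most 1. -/
theorem stmt_7 {V : Type*} [Fintype V] (V_pub : Set V)
    (f₁ : SimpleGraph V → V → ℕ)
    (hf₁ : ∀ (G : SimpleGraph V) (v : V),
      f₁ G v = Nat.card {u : V | u ∈ V_pub ∧ G.Adj v u})
    (G G' : SimpleGraph V)
    (hnb : ∃ e : Sym2 V, symmDiff G.edgeSet G'.edgeSet = {e}) :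
    ∑ v ∈ Finset.univ.filter (fun v => v ∉ V_pub),
        |(f₁ G v : ℝ) - (f₁ G' v : ℝ)| ≤ 1 := by
  classical
  obtain ⟨e, he⟩ := hnb
  induction e using Sym2.ind with
  | _ a b =>
  -- count as Finset card
  have hcount : ∀ (H : SimpleGraph V) (v : V),
      f₁ H v = (Finset.univ.filter (fun u => u ∈ V_pub ∧ H.Adj v u)).card := by
    intro H v
    rw [hf₁]
    rw [Nat.card_eq_fintype_card]
    exact Fintype.card_of_subtype _ (fun x => by simp)
  -- adjacency agreement away from the edge
  have hagree : ∀ v u : V, s(v, u) ≠ s(a, b) → (G.Adj v u ↔ G'.Adj v u) := by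
    intro v u hne
    by_contra hdiff
    have : s(v, u) ∈ symmDiff G.edgeSet G'.edgeSet := by
      rw [Set.mem_symmDiff]
      simp only [SimpleGraph.mem_edgeSet]
      tauto
    rw [he] at this
    exact hne this
  -- erase equality at endpoint a
  have herase : ∀ v x : V, (∀ u : V, u ≠ x → (G.Adj v u ↔ G'.Adj v u)) →
      (Finset.univ.filter (fun u => u ∈ V_pub ∧ G.Adj v u)).erase x
        = (Finset.univ.filter (fun u => u ∈ V_pub ∧ G'.Adj v u)).erase x := by
    intro v x hx
    ext u
    simp only [Finset.mem_erase, Finset.mem_filter, Finset.mem_univ, true_and]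
    constructor
    · rintro ⟨hux, hup, hadj⟩
      exact ⟨hux, hup, (hx u hux).1 hadj⟩
    · rintro ⟨hux, hup, hadj⟩
      exact ⟨hux, hup, (hx u hux).2 hadj⟩
  have habs : ∀ v x : V, (∀ u : V, u ≠ x → (G.Adj v u ↔ G'.Adj v u)) →
      |(f₁ G v : ℝ) - (f₁ G' v : ℝ)| ≤ 1 := by
    intro v x hx
    have h := herase v x hx
    rw [hcount, hcount]
    rw [abs_sub_le_iff]
    constructor
    · rw [sub_le_iff_le_add]
      have h1 := (Nat.cast_le (α := ℝ)).2 (card_le_helper h)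
      push_cast at h1
      linarith
    · rw [sub_le_iff_le_add]
      have h2 := (Nat.cast_le (α := ℝ)).2 (card_le_helper h.symm)
      push_cast at h2
      linarith
  -- vertices other than a, b have equal counts
  have hzero : ∀ v : V, (v = a → b ∉ V_pub) → (v = b → a ∉ V_pub) →
      f₁ G v = f₁ G' v := by
    intro v hva hvb
    rw [hcount, hcount]
    congr 1
    ext u
    simp only [Finset.mem_filter, Finset.mem_univ, true_and]
    have : (u ∈ V_pub ∧ G.Adj v u) ↔ (u ∈ V_pub ∧ G'.Adj v u) := by
      by_cases hvu : s(v, u) = s(a, b)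
      · rw [Sym2.eq_iff] at hvu
        rcases hvu with ⟨rfl, rfl⟩ | ⟨rfl, rfl⟩
        · have := hva rfl
          tauto
        · have := hvb rfl
          tauto
      · rw [hagree v u hvu]
    exact this
  -- term bound vs indicator at a single vertex w
  have hterm_bound : ∀ w : V, (∀ v : V, v ∉ V_pub → v ≠ w →
        f₁ G v = f₁ G' v) →
      ∑ v ∈ Finset.univ.filter (fun v => v ∉ V_pub),
        |(f₁ G v : ℝ) - (f₁ G' v : ℝ)|
      ≤ ∑ v ∈ Finset.univ.filter (fun v => v ∉ V_pub),
        (if v = w then |(f₁ G w : ℝ) - (f₁ G' w : ℝ)| else 0) := by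
    intro w hw
    apply Finset.sum_le_sum
    intro v hv
    rw [Finset.mem_filter] at hv
    by_cases hvw : v = w
    · subst hvw; simp
    · rw [if_neg hvw, hw v hv.2 hvw]
      simp
  have hfin : ∀ w : V, |(f₁ G w : ℝ) - (f₁ G' w : ℝ)| ≤ 1 →
      (∀ v : V, v ∉ V_pub → v ≠ w → f₁ G v = f₁ G' v) →
      ∑ v ∈ Finset.univ.filter (fun v => v ∉ V_pub),
        |(f₁ G v : ℝ) - (f₁ G' v : ℝ)| ≤ 1 := by
    intro w hle hw
    refine le_trans (hterm_bound w hw) ?_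
    rw [Finset.sum_ite_eq' _ w (fun _ => |(f₁ G w : ℝ) - (f₁ G' w : ℝ)|)]
    split
    · exact hle
    · norm_num
  by_cases hb : b ∈ V_pub
  · -- only v = a can contribute
    apply hfin a
    · apply habs a b
      intro u hub
      apply hagree
      intro hcon
      rw [Sym2.eq_iff] at hcon
      rcases hcon with ⟨_, rfl⟩ | ⟨rfl, rfl⟩
      · exact hub rfl
      · exact hub rfl
    · intro v hv hva
      apply hzero
      · intro h; exact absurd h hva
      · intro h; subst h; exact absurd hb hv
  · by_cases ha : a ∈ V_pub
    · -- only v = b can contribute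
      apply hfin b
      · apply habs b a
        intro u hua
        apply hagree
        intro hcon
        rw [Sym2.eq_iff] at hcon
        rcases hcon with ⟨rfl, rfl⟩ | ⟨_, rfl⟩
        · exact hua rfl
        · exact hua rfl
      · intro v hv hvb
        apply hzero
        · intro h; subst h; exact absurd ha hv
        · intro h; exact absurd h hvb
    · -- no contribution at all
      have : ∀ v ∈ Finset.univ.filter (fun v => v ∉ V_pub),
          |(f₁ G v : ℝ) - (f₁ G' v : ℝ)| = 0 := by
        intro v _
        rw [hzero v (fun _ => hb) (fun _ => ha), sub_self, abs_zero]
      rw [Finset.sum_congr rfl this]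
      simp
end
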